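/- For every integer k ≥ 2, the diamond-necklace N_k, which has order n = 4k, satisfies F(N_k) = k + 2 = n/4 + 2. -/
import Mathlib


/-- A set `T` of (colored) vertices is closed under the forcing rule: whenever a colored
vertex `v ∈ T` has the property that all of its neighbors outside `T` are equal to `w`
(i.e. `w` is its unique non-colored neighbor, if `w ∉ T`), then `w ∈ T`. -/
def ForcingClosed {V : Type*} (G : SimpleGraph V) (T : Set V) : Prop :=
  ∀ v ∈ T, ∀ w, G.Adj v w → (∀ u, G.Adj v u → u ∉ T → u = w) → w ∈ T

/-- `S` is a (zero) forcing set of `G`: iterating the forcing process starting from `S`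
colors all vertices; equivalently, every forcing-closed superset of `S` is everything. -/
def IsForcingSet {V : Type*} (G : SimpleGraph V) (S : Set V) : Prop :=
  ∀ T : Set V, S ⊆ T → ForcingClosed G T → ∀ v, v ∈ T

/-- `S` is a total forcing set of `G`: a forcing set whose induced subgraph has no
isolated vertex. -/
def IsTotalForcingSet {V : Type*} (G : SimpleGraph V) (S : Set V) : Prop :=
  IsForcingSet G S ∧ ∀ v ∈ S, ∃ w ∈ S, G.Adj v w

/-- The forcing number `F(G)`: minimum cardinality of a forcing set. -/
noncomputable def forcingNumber {V : Type*} (G : SimpleGraph V) : ℕ :=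
  sInf {n : ℕ | ∃ S : Set V, IsForcingSet G S ∧ S.ncard = n}

/-- The total forcing number `F_t(G)`: minimum cardinality of a total forcing set. -/
noncomputable def totalForcingNumber {V : Type*} (G : SimpleGraph V) : ℕ :=
  sInf {n : ℕ | ∃ S : Set V, IsTotalForcingSet G S ∧ S.ncard = n}

/-- The diamond-necklace `N_k`.  Its vertices are pairs `(i, j)` with `i : Fin k`
indexing the diamond and `j : Fin 4` the position inside diamond `D_i`, where
`j = 0, 1, 2, 3` correspond to the vertices `a_i, b_i, c_i, d_i` respectively and
`a_i b_i` is the missing edge of the diamond.  Two vertices in the same diamond are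
adjacent unless they are `a_i` and `b_i`, and in addition `a_i` is joined to `b_{i+1}`
(indices modulo `k`). -/
def diamondNecklace (k : ℕ) : SimpleGraph (Fin k × Fin 4) :=
  SimpleGraph.fromRel (fun p q =>
    (p.1 = q.1 ∧ ¬ ((p.2 = 0 ∧ q.2 = 1) ∨ (p.2 = 1 ∧ q.2 = 0))) ∨
    ((q.1 : ℕ) = ((p.1 : ℕ) + 1) % k ∧ p.2 = 0 ∧ q.2 = 1))

namespace DN
variable {k : ℕ} [NeZero k]

lemma val_add_one (hk : 2 ≤ k) (i : Fin k) : ((i + 1 : Fin k) : ℕ) = ((i : ℕ) + 1) % k := by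
  rw [Fin.add_def, Fin.val_one']
  rw [Nat.mod_eq_of_lt (by omega : 1 < k)]

lemma sub_add (hk : 2 ≤ k) (i : Fin k) : (i - 1) + 1 = i := by
  exact sub_add_cancel i 1

lemma add_one_ne (hk : 2 ≤ k) (i : Fin k) : i + 1 ≠ i := by
  intro h
  have h1 : (1 : Fin k) = 0 := by
    have h2 := congrArg (· - i) h
    simpa [add_comm, add_sub_cancel_right] using h2
  have h3 := congrArg Fin.val h1
  rw [Fin.val_one', Fin.val_zero, Nat.mod_eq_of_lt (by omega : 1 < k)] at h3
  omega

lemma sub_one_ne (hk : 2 ≤ k) (i : Fin k) : i - 1 ≠ i := by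
  intro h
  have := sub_add hk i
  rw [h] at this
  exact add_one_ne hk i this

-- positive adjacencies within a diamond
lemma adj_same (i : Fin k) {x y : Fin 4} (hxy : x ≠ y)
    (hno : ¬ ((x = 0 ∧ y = 1) ∨ (x = 1 ∧ y = 0))) :
    (diamondNecklace k).Adj (i, x) (i, y) := by
  rw [diamondNecklace, SimpleGraph.fromRel_adj]
  exact ⟨by simp [hxy], Or.inl (Or.inl ⟨rfl, hno⟩)⟩

lemma adj_cross (hk : 2 ≤ k) (i : Fin k) :
    (diamondNecklace k).Adj (i, 0) (i + 1, 1) := by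
  rw [diamondNecklace, SimpleGraph.fromRel_adj]
  refine ⟨by simp, Or.inl (Or.inr ⟨val_add_one hk i, rfl, rfl⟩)⟩

lemma adj_cross' (hk : 2 ≤ k) (i : Fin k) :
    (diamondNecklace k).Adj (i, 1) (i - 1, 0) := by
  have := (adj_cross hk (i - 1)).symm
  rwa [sub_add hk i] at this

-- neighbour enumerations
lemma nbr_a (hk : 2 ≤ k) {i : Fin k} {u : Fin k × Fin 4}
    (h : (diamondNecklace k).Adj (i, 0) u) :
    u = (i, 2) ∨ u = (i, 3) ∨ u = (i + 1, 1) := by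
  rw [diamondNecklace, SimpleGraph.fromRel_adj] at h
  obtain ⟨ui, uj⟩ := u
  obtain ⟨hne, h | h⟩ := h
  · rcases h with ⟨h1, h2⟩ | ⟨h1, -, h3⟩
    · obtain rfl : i = ui := h1
      fin_cases uj <;> simp_all
    · refine Or.inr (Or.inr ?_)
      obtain rfl : uj = 1 := h3
      have : ui = i + 1 := Fin.ext (by rw [val_add_one hk i]; exact h1)
      simp [this]
  · rcases h with ⟨h1, h2⟩ | ⟨-, -, h3⟩
    · obtain rfl : ui = i := h1
      fin_cases uj <;> simp_all
    · simp at h3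

lemma nbr_b (hk : 2 ≤ k) {i : Fin k} {u : Fin k × Fin 4}
    (h : (diamondNecklace k).Adj (i, 1) u) :
    u = (i, 2) ∨ u = (i, 3) ∨ u = (i - 1, 0) := by
  rw [diamondNecklace, SimpleGraph.fromRel_adj] at h
  obtain ⟨ui, uj⟩ := u
  obtain ⟨hne, h | h⟩ := h
  · rcases h with ⟨h1, h2⟩ | ⟨-, h2, -⟩
    · obtain rfl : i = ui := h1
      fin_cases uj <;> simp_all
    · simp at h2
  · rcases h with ⟨h1, h2⟩ | ⟨h1, h2, -⟩
    · obtain rfl : ui = i := h1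
      fin_cases uj <;> simp_all
    · refine Or.inr (Or.inr ?_)
      obtain rfl : uj = 0 := h2
      have hui : ui + 1 = i := Fin.ext (by rw [val_add_one hk ui]; exact h1.symm)
      have : ui = i - 1 := eq_sub_of_add_eq hui
      simp [this]

lemma nbr_c {i : Fin k} {u : Fin k × Fin 4}
    (h : (diamondNecklace k).Adj (i, 2) u) :
    u = (i, 0) ∨ u = (i, 1) ∨ u = (i, 3) := by
  rw [diamondNecklace, SimpleGraph.fromRel_adj] at h
  obtain ⟨ui, uj⟩ := u
  obtain ⟨hne, h | h⟩ := h
  · rcases h with ⟨h1, -⟩ | ⟨-, h2, -⟩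
    · obtain rfl : i = ui := h1
      fin_cases uj <;> simp_all
    · simp at h2
  · rcases h with ⟨h1, -⟩ | ⟨-, -, h3⟩
    · obtain rfl : ui = i := h1
      fin_cases uj <;> simp_all
    · simp at h3

lemma nbr_d {i : Fin k} {u : Fin k × Fin 4}
    (h : (diamondNecklace k).Adj (i, 3) u) :
    u = (i, 0) ∨ u = (i, 1) ∨ u = (i, 2) := by
  rw [diamondNecklace, SimpleGraph.fromRel_adj] at h
  obtain ⟨ui, uj⟩ := u
  obtain ⟨hne, h | h⟩ := h
  · rcases h with ⟨h1, -⟩ | ⟨-, h2, -⟩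
    · obtain rfl : i = ui := h1
      fin_cases uj <;> simp_all
    · simp at h2
  · rcases h with ⟨h1, -⟩ | ⟨-, -, h3⟩
    · obtain rfl : ui = i := h1
      fin_cases uj <;> simp_all
    · simp at h3

end DN

namespace DN
variable {k : ℕ} [NeZero k]

def SS (k : ℕ) [NeZero k] : Set (Fin k × Fin 4) :=
  insert (0, 1) (insert (0, 3) {p | p.2 = 2})

lemma mem_SS_c (i : Fin k) : (i, 2) ∈ SS k := by simp [SS]

lemma ncard_SS (hk : 2 ≤ k) : (SS k).ncard = k + 2 := by
  have h2 : ({p : Fin k × Fin 4 | p.2 = 2} : Set _) = (fun i : Fin k => (i, 2)) '' Set.univ := by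
    ext ⟨a, b⟩
    simp only [Set.mem_setOf_eq, Set.image_univ, Set.mem_range, Prod.mk.injEq]
    constructor
    · rintro rfl; exact ⟨a, rfl, rfl⟩
    · rintro ⟨x, -, rfl⟩; rfl
  have hinj : Function.Injective (fun i : Fin k => ((i, 2) : Fin k × Fin 4)) := by
    intro a b h; simpa [Prod.ext_iff] using h
  have hc2 : ({p : Fin k × Fin 4 | p.2 = 2} : Set _).ncard = k := by
    rw [h2, Set.ncard_image_of_injective _ hinj, Set.ncard_univ, Nat.card_eq_fintype_card,
      Fintype.card_fin]
  rw [SS, Set.ncard_insert_of_notMem (by simp) (Set.toFinite _),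
    Set.ncard_insert_of_notMem (by simp) (Set.toFinite _), hc2]

lemma forcing_SS (hk : 2 ≤ k) : IsForcingSet (diamondNecklace k) (SS k) := by
  intro T hST hT v
  have hc : ∀ i : Fin k, (i, 2) ∈ T := fun i => hST (mem_SS_c i)
  have key : ∀ n : ℕ, ∀ i : Fin k, (i : ℕ) = n → (i, 1) ∈ T ∧ (i, 3) ∈ T ∧ (i, 0) ∈ T := by
    intro n
    induction n with
    | zero =>
      intro i hi
      obtain rfl : i = 0 := Fin.ext (by simp [hi])
      have hb : ((0 : Fin k), (1 : Fin 4)) ∈ T := hST (by simp [SS])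
      have hd : ((0 : Fin k), (3 : Fin 4)) ∈ T := hST (by simp [SS])
      refine ⟨hb, hd, ?_⟩
      refine hT (0, 2) (hc 0) (0, 0) (adj_same 0 (by decide) (by decide)) ?_
      intro u hu hnu
      rcases nbr_c hu with rfl | rfl | rfl
      · rfl
      · exact absurd hb hnu
      · exact absurd hd hnu
    | succ n ih =>
      intro i hi
      have hlt : n + 1 < k := hi ▸ i.isLt
      set j : Fin k := ⟨n, by omega⟩ with hj
      have hij : i = j + 1 := by
        apply Fin.ext
        rw [val_add_one hk j]
        simp [hj, hi, Nat.mod_eq_of_lt hlt]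
      obtain ⟨hb', hd', ha'⟩ := ih j rfl
      have hb : (i, 1) ∈ T := by
        rw [hij]
        refine hT (j, 0) ha' (j + 1, 1) (adj_cross hk j) ?_
        intro u hu hnu
        rcases nbr_a hk hu with rfl | rfl | rfl
        · exact absurd (hc j) hnu
        · exact absurd hd' hnu
        · rfl
      have hd : (i, 3) ∈ T := by
        refine hT (i, 1) hb (i, 3) (adj_same i (by decide) (by decide)) ?_
        intro u hu hnu
        rcases nbr_b hk hu with rfl | rfl | rfl
        · exact absurd (hc i) hnu
        · rfl
        · have : i - 1 = j := by rw [hij]; exact add_sub_cancel_right j 1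
          rw [this] at hnu
          exact absurd ha' hnu
      refine ⟨hb, hd, ?_⟩
      refine hT (i, 2) (hc i) (i, 0) (adj_same i (by decide) (by decide)) ?_
      intro u hu hnu
      rcases nbr_c hu with rfl | rfl | rfl
      · rfl
      · exact absurd hb hnu
      · exact absurd hd hnu
  obtain ⟨i, j⟩ := v
  obtain ⟨h1, h3, h0⟩ := key (i : ℕ) i rfl
  fin_cases j
  · exact h0
  · exact h1
  · exact hc i
  · exact h3

end DN



namespace DN
variable {k : ℕ} [NeZero k]

lemma twin (hk : 2 ≤ k) {S : Set (Fin k × Fin 4)}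
    (hS : IsForcingSet (diamondNecklace k) S) (i : Fin k) :
    (i, 2) ∈ S ∨ (i, 3) ∈ S := by
  by_contra h
  push_neg at h
  obtain ⟨h2, h3⟩ := h
  set T : Set (Fin k × Fin 4) := {(i, 2), (i, 3)}ᶜ with hTdef
  have hsub : S ⊆ T := by
    intro p hp
    simp only [hTdef, Set.mem_compl_iff, Set.mem_insert_iff, Set.mem_singleton_iff]
    rintro (rfl | rfl) <;> [exact h2 hp; exact h3 hp]
  have hclosed : ForcingClosed (diamondNecklace k) T := by
    intro v hv w hadj hall
    by_contra hw
    have hw' : w = (i, 2) ∨ w = (i, 3) := by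
      by_contra hcon
      push_neg at hcon
      exact hw (by simp [hTdef, hcon.1, hcon.2])
    have h2T : ((i, 2) : Fin k × Fin 4) ∉ T := by simp [hTdef]
    have h3T : ((i, 3) : Fin k × Fin 4) ∉ T := by simp [hTdef]
    rcases hw' with rfl | rfl
    · rcases nbr_c hadj.symm with rfl | rfl | rfl
      · have := hall (i, 3) (adj_same i (by decide) (by decide)) h3T
        simp at this
      · have := hall (i, 3) (adj_same i (by decide) (by decide)) h3T
        simp at this
      · exact h3T hv
    · rcases nbr_d hadj.symm with rfl | rfl | rfl
      · have := hall (i, 2) (adj_same i (by decide) (by decide)) h2T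
        simp at this
      · have := hall (i, 2) (adj_same i (by decide) (by decide)) h2T
        simp at this
      · exact h2T hv
  have := hS T hsub hclosed (i, 2)
  simp [hTdef] at this

lemma lower (hk : 2 ≤ k) {S : Set (Fin k × Fin 4)}
    (hS : IsForcingSet (diamondNecklace k) S) : k + 2 ≤ S.ncard := by
  classical
  by_contra hle
  push_neg at hle
  have hcard : S.ncard ≤ k + 1 := by omega
  have hfin : S.Finite := Set.toFinite S
  set F := hfin.toFinset with hFdef
  have hFS : ∀ p, p ∈ F ↔ p ∈ S := fun p => hfin.mem_toFinset
  have hFcard : F.card = S.ncard := (Set.ncard_eq_toFinset_card S hfin).symm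
  set g : Fin k → ℕ := fun i => (F.filter fun p => p.1 = i).card with hgdef
  have hsum : F.card = ∑ i : Fin k, g i :=
    Finset.card_eq_sum_card_fiberwise (fun x _ => Finset.mem_univ x.1)
  have hg1 : ∀ i, 1 ≤ g i := by
    intro i
    rcases twin hk hS i with h | h
    · exact Finset.card_pos.mpr ⟨(i, 2), Finset.mem_filter.mpr ⟨(hFS _).mpr h, rfl⟩⟩
    · exact Finset.card_pos.mpr ⟨(i, 3), Finset.mem_filter.mpr ⟨(hFS _).mpr h, rfl⟩⟩
  have herase : ∀ i : Fin k, (Finset.univ.erase i).card = k - 1 := by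
    intro i
    rw [Finset.card_erase_of_mem (Finset.mem_univ i)]
    simp
  have hsum_erase : ∀ i : Fin k, g i + ∑ x ∈ Finset.univ.erase i, g x = ∑ x : Fin k, g x :=
    fun i => Finset.add_sum_erase Finset.univ g (Finset.mem_univ i)
  have key1 : ∀ i, g i ≤ 2 := by
    intro i
    have h1 : (Finset.univ.erase i).card • 1 ≤ ∑ x ∈ Finset.univ.erase i, g x :=
      Finset.card_nsmul_le_sum _ _ _ (fun x _ => hg1 x)
    rw [herase i, smul_eq_mul, mul_one] at h1
    have h2 := hsum_erase i
    omega
  have key2 : ∀ i j : Fin k, i ≠ j → 2 ≤ g i → 2 ≤ g j → False := by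
    intro i j hij h2i h2j
    have hjmem : j ∈ Finset.univ.erase i := Finset.mem_erase.mpr ⟨hij.symm, Finset.mem_univ j⟩
    have h3 : g j + ∑ x ∈ (Finset.univ.erase i).erase j, g x = ∑ x ∈ Finset.univ.erase i, g x :=
      Finset.add_sum_erase _ g hjmem
    have h4 : ((Finset.univ.erase i).erase j).card • 1 ≤ ∑ x ∈ (Finset.univ.erase i).erase j, g x :=
      Finset.card_nsmul_le_sum _ _ _ (fun x _ => hg1 x)
    rw [Finset.card_erase_of_mem hjmem, herase i, smul_eq_mul, mul_one] at h4
    have h5 := hsum_erase i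
    omega
  have pair : ∀ (i : Fin k) (p q : Fin k × Fin 4), p ∈ S → q ∈ S → p.1 = i → q.1 = i →
      p ≠ q → 2 ≤ g i := by
    intro i p q hp hq hpi hqi hne
    exact Finset.one_lt_card.mpr
      ⟨p, Finset.mem_filter.mpr ⟨(hFS _).mpr hp, hpi⟩,
       q, Finset.mem_filter.mpr ⟨(hFS _).mpr hq, hqi⟩, hne⟩
  have triple : ∀ (i : Fin k) (p q r : Fin k × Fin 4), p ∈ S → q ∈ S → r ∈ S →
      p.1 = i → q.1 = i → r.1 = i → p ≠ q → p ≠ r → q ≠ r → False := by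
    intro i p q r hp hq hr hpi hqi hri hpq hpr hqr
    have : 2 < g i := Finset.two_lt_card_iff.mpr
      ⟨p, q, r, Finset.mem_filter.mpr ⟨(hFS _).mpr hp, hpi⟩,
        Finset.mem_filter.mpr ⟨(hFS _).mpr hq, hqi⟩,
        Finset.mem_filter.mpr ⟨(hFS _).mpr hr, hri⟩, hpq, hpr, hqr⟩
    have := key1 i
    omega
  -- a diamond containing a vertex of S outside {c,d} has two S-vertices
  have fib2 : ∀ (i : Fin k) (x : Fin 4), x = 0 ∨ x = 1 → (i, x) ∈ S → 2 ≤ g i := by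
    intro i x hx hmem
    rcases twin hk hS i with h | h
    · exact pair i (i, x) (i, 2) hmem h rfl rfl (by rcases hx with rfl | rfl <;> simp)
    · exact pair i (i, x) (i, 3) hmem h rfl rfl (by rcases hx with rfl | rfl <;> simp)
  have hclosed : ForcingClosed (diamondNecklace k) S := by
    intro v hv w hadj hall
    by_contra hw
    obtain ⟨i, jj⟩ := v
    have hj : jj = 0 ∨ jj = 1 ∨ jj = 2 ∨ jj = 3 := by fin_cases jj <;> simp
    rcases hj with rfl | rfl | rfl | rfl
    · -- v = a_i
      have hfi : 2 ≤ g i := fib2 i 0 (Or.inl rfl) hv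
      have hx : ((i + 1 : Fin k), (1 : Fin 4)) ∉ S := by
        intro hmem
        exact key2 i (i + 1) (add_one_ne hk i).symm hfi (fib2 (i + 1) 1 (Or.inr rfl) hmem)
      rcases nbr_a hk hadj with rfl | rfl | rfl
      · have := hall (i + 1, 1) (adj_cross hk i) hx
        simp at this
      · have := hall (i + 1, 1) (adj_cross hk i) hx
        simp at this
      · -- w = (i+1,1); find uncolored u among (i,2),(i,3)
        by_cases h2 : (i, (2 : Fin 4)) ∈ S
        · by_cases h3 : (i, (3 : Fin 4)) ∈ S
          · exact triple i (i, 0) (i, 2) (i, 3) hv h2 h3 rfl rfl rfl (by simp) (by simp) (by simp)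
          · have := hall (i, 3) (adj_same i (by decide) (by decide)) h3
            rw [Prod.ext_iff] at this
            exact absurd this.1 (add_one_ne hk i).symm
        · have := hall (i, 2) (adj_same i (by decide) (by decide)) h2
          rw [Prod.ext_iff] at this
          exact absurd this.1 (add_one_ne hk i).symm
    · -- v = b_i
      have hfi : 2 ≤ g i := fib2 i 1 (Or.inr rfl) hv
      have hx : ((i - 1 : Fin k), (0 : Fin 4)) ∉ S := by
        intro hmem
        exact key2 i (i - 1) (sub_one_ne hk i).symm hfi (fib2 (i - 1) 0 (Or.inl rfl) hmem)
      rcases nbr_b hk hadj with rfl | rfl | rfl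
      · have := hall (i - 1, 0) (adj_cross' hk i) hx
        simp at this
      · have := hall (i - 1, 0) (adj_cross' hk i) hx
        simp at this
      · by_cases h2 : (i, (2 : Fin 4)) ∈ S
        · by_cases h3 : (i, (3 : Fin 4)) ∈ S
          · exact triple i (i, 1) (i, 2) (i, 3) hv h2 h3 rfl rfl rfl (by simp) (by simp) (by simp)
          · have := hall (i, 3) (adj_same i (by decide) (by decide)) h3
            rw [Prod.ext_iff] at this
            exact absurd this.1 (sub_one_ne hk i).symm
        · have := hall (i, 2) (adj_same i (by decide) (by decide)) h2
          rw [Prod.ext_iff] at this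
          exact absurd this.1 (sub_one_ne hk i).symm
    · -- v = c_i
      rcases nbr_c hadj with rfl | rfl | rfl
      · by_cases h1 : (i, (1 : Fin 4)) ∈ S
        · by_cases h3 : (i, (3 : Fin 4)) ∈ S
          · exact triple i (i, 2) (i, 1) (i, 3) hv h1 h3 rfl rfl rfl (by simp) (by simp) (by simp)
          · have := hall (i, 3) (adj_same i (by decide) (by decide)) h3
            simp at this
        · have := hall (i, 1) (adj_same i (by decide) (by decide)) h1
          simp at this
      · by_cases h0 : (i, (0 : Fin 4)) ∈ S
        · by_cases h3 : (i, (3 : Fin 4)) ∈ S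
          · exact triple i (i, 2) (i, 0) (i, 3) hv h0 h3 rfl rfl rfl (by simp) (by simp) (by simp)
          · have := hall (i, 3) (adj_same i (by decide) (by decide)) h3
            simp at this
        · have := hall (i, 0) (adj_same i (by decide) (by decide)) h0
          simp at this
      · by_cases h0 : (i, (0 : Fin 4)) ∈ S
        · by_cases h1 : (i, (1 : Fin 4)) ∈ S
          · exact triple i (i, 2) (i, 0) (i, 1) hv h0 h1 rfl rfl rfl (by simp) (by simp) (by simp)
          · have := hall (i, 1) (adj_same i (by decide) (by decide)) h1
            simp at this
        · have := hall (i, 0) (adj_same i (by decide) (by decide)) h0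
          simp at this
    · -- v = d_i
      rcases nbr_d hadj with rfl | rfl | rfl
      · by_cases h1 : (i, (1 : Fin 4)) ∈ S
        · by_cases h2 : (i, (2 : Fin 4)) ∈ S
          · exact triple i (i, 3) (i, 1) (i, 2) hv h1 h2 rfl rfl rfl (by simp) (by simp) (by simp)
          · have := hall (i, 2) (adj_same i (by decide) (by decide)) h2
            simp at this
        · have := hall (i, 1) (adj_same i (by decide) (by decide)) h1
          simp at this
      · by_cases h0 : (i, (0 : Fin 4)) ∈ S
        · by_cases h2 : (i, (2 : Fin 4)) ∈ S
          · exact triple i (i, 3) (i, 0) (i, 2) hv h0 h2 rfl rfl rfl (by simp) (by simp) (by simp)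
          · have := hall (i, 2) (adj_same i (by decide) (by decide)) h2
            simp at this
        · have := hall (i, 0) (adj_same i (by decide) (by decide)) h0
          simp at this
      · by_cases h0 : (i, (0 : Fin 4)) ∈ S
        · by_cases h1 : (i, (1 : Fin 4)) ∈ S
          · exact triple i (i, 3) (i, 0) (i, 1) hv h0 h1 rfl rfl rfl (by simp) (by simp) (by simp)
          · have := hall (i, 1) (adj_same i (by decide) (by decide)) h1
            simp at this
        · have := hall (i, 0) (adj_same i (by decide) (by decide)) h0
          simp at this
  have hall : ∀ v, v ∈ S := hS S (subset_refl S) hclosed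
  have huniv : S = Set.univ := Set.eq_univ_of_forall hall
  rw [huniv, Set.ncard_univ, Nat.card_eq_fintype_card, Fintype.card_prod,
    Fintype.card_fin, Fintype.card_fin] at hcard
  omega

end DN

/-- For every `k ≥ 2`, the diamond-necklace `N_k` has order `n = 4k` and satisfies
`F(N_k) = k + 2 = n/4 + 2`. -/
theorem forcingNumber_diamondNecklace (k : ℕ) (hk : 2 ≤ k) :
    Fintype.card (Fin k × Fin 4) = 4 * k ∧
    forcingNumber (diamondNecklace k) = k + 2 := by
  haveI : NeZero k := ⟨by omega⟩
  constructor
  · rw [Fintype.card_prod, Fintype.card_fin, Fintype.card_fin]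
    ring
  · refine le_antisymm (Nat.sInf_le ⟨DN.SS k, DN.forcing_SS hk, DN.ncard_SS hk⟩) ?_
    refine le_csInf ⟨k + 2, DN.SS k, DN.forcing_SS hk, DN.ncard_SS hk⟩ ?_
    rintro n ⟨S, hSf, rfl⟩
    exact DN.lower hk hSf
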